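/- arXiv:1506.01904 — 3 statements merged into one kernel-verified Lean document; each statement's English description precedes it below -/
import Mathlib

section
/- Let (νᵢ)_{0 ≤ i ≤ N} and (ν′ⱼ)_{0 ≤ j ≤ M} be nondecreasing sequences of rational numbers. Suppose a pair (i,j) satisfies either ν′_{j−1} ≤ νᵢ ≤ ν′ⱼ or ν_{i−1} ≤ ν′ⱼ < νᵢ (with the convention ν₋₁ = ν′₋₁ = −1). Then for every integer k with 0 ≤ i−k ≤ N and 0 ≤ j+k ≤ M, one has min(ν_{i−k}, ν′_{j+k}) ≤ min(νᵢ, ν′ⱼ). -/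
theorem stmt6 (N M : ℕ) (ν ν' : ℤ → ℚ)
    (hν1 : ν (-1) = -1) (hν'1 : ν' (-1) = -1)
    (hν : ∀ i j : ℤ, -1 ≤ i → i ≤ j → j ≤ N → ν i ≤ ν j)
    (hν' : ∀ i j : ℤ, -1 ≤ i → i ≤ j → j ≤ M → ν' i ≤ ν' j)
    (i j : ℤ) (hi0 : 0 ≤ i) (hiN : i ≤ N) (hj0 : 0 ≤ j) (hjM : j ≤ M)
    (hinv : (ν' (j - 1) ≤ ν i ∧ ν i ≤ ν' j) ∨ (ν (i - 1) ≤ ν' j ∧ ν' j < ν i)) :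
    ∀ k : ℤ, 0 ≤ i - k → i - k ≤ N → 0 ≤ j + k → j + k ≤ M →
      min (ν (i - k)) (ν' (j + k)) ≤ min (ν i) (ν' j) := by
  intro k hk1 hk2 hk3 hk4
  rcases le_or_gt 0 k with hk | hk
  · -- k ≥ 0 : ν (i-k) ≤ ν i
    have h1 : ν (i - k) ≤ ν i := hν _ _ (by linarith) (by linarith) hiN
    rcases hinv with ⟨ha, hb⟩ | ⟨ha, hb⟩
    · exact le_min (le_trans (min_le_left _ _) h1)
        (le_trans (min_le_left _ _) (le_trans h1 hb))
    · rcases eq_or_lt_of_le hk with rfl | hk'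
      · simp
      · have h2 : ν (i - k) ≤ ν (i - 1) := hν _ _ (by linarith) (by linarith) (by linarith)
        exact le_min (le_trans (min_le_left _ _) h1)
          (le_trans (min_le_left _ _) (le_trans h2 ha))
  · -- k < 0 : ν' (j+k) ≤ ν' (j-1) ≤ ν' j
    have h2 : ν' (j + k) ≤ ν' (j - 1) := hν' _ _ (by linarith) (by linarith) (by linarith)
    have h3 : ν' (j + k) ≤ ν' j := hν' _ _ (by linarith) (by linarith) hjM
    rcases hinv with ⟨ha, hb⟩ | ⟨ha, hb⟩
    · exact le_min (le_trans (min_le_right _ _) (le_trans h2 ha))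
        (le_trans (min_le_right _ _) h3)
    · exact le_min (le_trans (min_le_right _ _) (le_trans h3 hb.le))
        (le_trans (min_le_right _ _) h3)
end

section
/- Let (νᵢ)_{0 ≤ i ≤ N} and (ν′ⱼ)_{0 ≤ j ≤ M} be nondecreasing sequences of rationals. Run the greedy process: start at (0,0) and at each step increment the first coordinate if ν at the current first index is ≤ ν′ at the current second index, otherwise increment the second coordinate (staying in range). Then for every pair (i,j) output by the greedy process, min(νᵢ, ν′ⱼ) = max { min(ν_a, ν′_b) : 0 ≤ a ≤ N, 0 ≤ b ≤ M, a + b = i + j }. In other words, the greedy process computes, for each total degree, the maximum over all splittings of the minimum of the two values. -/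
theorem stmt7 (N M : ℕ) (ν ν' : ℤ → ℚ)
    (hν : ∀ i j : ℤ, 0 ≤ i → i ≤ j → j ≤ N → ν i ≤ ν j)
    (hν' : ∀ i j : ℤ, 0 ≤ i → i ≤ j → j ≤ M → ν' i ≤ ν' j)
    (T : ℕ) (p : ℕ → ℤ × ℤ) (hp0 : p 0 = (0, 0))
    (hstep : ∀ k : ℕ, k < T →
      (ν (p k).1 ≤ ν' (p k).2 ∧ p (k + 1) = ((p k).1 + 1, (p k).2) ∧ (p k).1 + 1 ≤ N) ∨
      (ν' (p k).2 < ν (p k).1 ∧ p (k + 1) = ((p k).1, (p k).2 + 1) ∧ (p k).2 + 1 ≤ M)) :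
    ∀ k : ℕ, k ≤ T →
      IsGreatest
        {x : ℚ | ∃ a b : ℤ, 0 ≤ a ∧ a ≤ N ∧ 0 ≤ b ∧ b ≤ M ∧
          a + b = (p k).1 + (p k).2 ∧ x = min (ν a) (ν' b)}
        (min (ν (p k).1) (ν' (p k).2)) := by
  have inv : ∀ k : ℕ, k ≤ T →
      0 ≤ (p k).1 ∧ (p k).1 ≤ N ∧ 0 ≤ (p k).2 ∧ (p k).2 ≤ M ∧
      (∀ a : ℤ, 0 ≤ a → a < (p k).1 → ν a ≤ ν' (p k).2) ∧
      (∀ b : ℤ, 0 ≤ b → b < (p k).2 → ν' b < ν (p k).1) := by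
    intro k
    induction k with
    | zero =>
      intro _
      rw [hp0]
      refine ⟨le_refl _, by positivity, le_refl _, by positivity, ?_, ?_⟩
      · intro a ha ha'; omega
      · intro b hb hb'; omega
    | succ n ih =>
      intro hk
      have hn : n < T := hk
      obtain ⟨h1, h2, h3, h4, h5, h6⟩ := ih (le_of_lt hn)
      rcases hstep n hn with ⟨hle, hp, hN⟩ | ⟨hlt, hp, hM⟩
      · rw [hp]
        refine ⟨by simp; linarith, hN, h3, h4, ?_, ?_⟩
        · intro a ha hai
          simp only at hai ⊢
          rcases lt_or_eq_of_le (Int.lt_add_one_iff.mp hai) with h | h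
          · exact h5 a ha h
          · rw [h]; exact hle
        · intro b hb hbj
          simp only at hbj ⊢
          exact lt_of_lt_of_le (h6 b hb hbj) (hν _ _ h1 (by linarith) hN)
      · rw [hp]
        refine ⟨h1, h2, by simp; linarith, hM, ?_, ?_⟩
        · intro a ha hai
          simp only at hai ⊢
          exact le_trans (h5 a ha hai) (hν' _ _ h3 (by linarith) hM)
        · intro b hb hbj
          simp only at hbj ⊢
          rcases lt_or_eq_of_le (Int.lt_add_one_iff.mp hbj) with h | h
          · exact h6 b hb h
          · rw [h]; exact hlt
  intro k hk
  obtain ⟨h1, h2, h3, h4, h5, h6⟩ := inv k hk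
  constructor
  · exact ⟨(p k).1, (p k).2, h1, h2, h3, h4, rfl, rfl⟩
  · rintro x ⟨a, b, ha0, haN, hb0, hbM, hab, rfl⟩
    rcases lt_trichotomy a (p k).1 with h | h | h
    · have hA : ν a ≤ ν' (p k).2 := h5 a ha0 h
      have hB : ν a ≤ ν (p k).1 := hν a _ ha0 (le_of_lt h) h2
      calc min (ν a) (ν' b) ≤ ν a := min_le_left _ _
        _ ≤ min (ν (p k).1) (ν' (p k).2) := le_min hB hA
    · have hb : b = (p k).2 := by omega
      rw [h, hb]
    · have hba : b < (p k).2 := by omega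
      have hA : ν' b < ν (p k).1 := h6 b hb0 hba
      have hB : ν' b ≤ ν' (p k).2 := hν' b _ hb0 (le_of_lt hba) h4
      calc min (ν a) (ν' b) ≤ ν' b := min_le_right _ _
        _ ≤ min (ν (p k).1) (ν' (p k).2) := le_min (le_of_lt hA) hB
end

section
/- Fix positive integers n₁, …, n_s and, for each pair (p, q) ∈ {1,…,s}², a function assigning to each index i ∈ {0,…,n_q} a value w_p(q, i) ∈ ℚ ∪ {∞} with w_p(q, 0) = 0, such that w_p(p, i) = ∞ if and only if i = n_p, and w_p(q, i) < ∞ for all i when q ≠ p. For a multi-index I = (i₁,…,i_s) with 0 ≤ i_q ≤ n_q set W_p(I) = Σ_q w_p(q, i_q) and W(I) = min_p W_p(I). Define the greedy process: I₀ = (0,…,0), and I_{k+1} = I_k + u_j where j is the least index with W_j(I_k) = W(I_k) (and u_j is the j-th standard unit multi-index). Then the process is well-defined for n₁ + ⋯ + n_s steps (the chosen coordinate always satisfies i_j < n_j), every I_k has total degree k, and the final multi-index is I_{n₁+⋯+n_s} = (n₁, …, n_s). -/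
theorem stmt13 (s : ℕ) (hs : 0 < s) (n : Fin s → ℕ) (hn : ∀ q, 0 < n q)
    (w : Fin s → Fin s → ℕ → WithTop ℚ)
    (hw0 : ∀ p q, w p q 0 = 0)
    (hwp : ∀ p : Fin s, ∀ i ≤ n p, (w p p i = ⊤ ↔ i = n p))
    (hwq : ∀ p q : Fin s, q ≠ p → ∀ i ≤ n q, w p q i ≠ ⊤)
    (I : ℕ → Fin s → ℕ) (hI0 : I 0 = fun _ => 0)
    (hstep : ∀ k < ∑ q, n q, ∃ j : Fin s,
      (∑ q, w j q (I k q)) =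
        (Finset.univ.inf fun p : Fin s => ∑ q, w p q (I k q)) ∧
      (∀ j' : Fin s, j' < j →
        (∑ q, w j' q (I k q)) ≠
          (Finset.univ.inf fun p : Fin s => ∑ q, w p q (I k q))) ∧
      I (k + 1) = Function.update (I k) j (I k j + 1)) :
    (∀ k ≤ ∑ q, n q, (∑ q, I k q) = k ∧ ∀ q, I k q ≤ n q) ∧
    (∀ k < ∑ q, n q, ∀ j : Fin s,
      ((∑ q, w j q (I k q)) =
          (Finset.univ.inf fun p : Fin s => ∑ q, w p q (I k q)) ∧
        (∀ j' : Fin s, j' < j →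
          (∑ q, w j' q (I k q)) ≠
            (Finset.univ.inf fun p : Fin s => ∑ q, w p q (I k q)))) →
      I k j < n j) ∧
    I (∑ q, n q) = n := by
  set N := ∑ q, n q with hN
  -- key lemma: if the invariant holds at k < N, any j achieving the min satisfies I k j < n j
  have key : ∀ k, (∑ q, I k q) = k → (∀ q, I k q ≤ n q) → k < N → ∀ j : Fin s,
      (∑ q, w j q (I k q)) = (Finset.univ.inf fun p : Fin s => ∑ q, w p q (I k q)) →
      I k j < n j := by
    intro k hsum hle hk j hj
    -- there is p with I k p < n p
    have hex : ∃ p, I k p < n p := by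
      by_contra h
      push_neg at h
      have : ∀ p, I k p = n p := fun p => le_antisymm (hle p) (h p)
      have : (∑ q, I k q) = N := by
        rw [hN]; exact Finset.sum_congr rfl fun q _ => this q
      omega
    obtain ⟨p, hp⟩ := hex
    -- W_p is finite
    have hWp : (∑ q, w p q (I k q)) ≠ ⊤ := by
      intro h
      obtain ⟨q, -, hq⟩ := WithTop.sum_eq_top.mp h
      revert hq
      by_cases hq : q = p
      · subst hq
        rw [hwp q (I k q) (hle q)]
        omega
      · exact fun h' => hwq p q hq (I k q) (hle q) h'
    have hinf : (Finset.univ.inf fun p : Fin s => ∑ q, w p q (I k q)) ≠ ⊤ := by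
      intro h
      exact hWp (top_le_iff.mp (h ▸ Finset.inf_le (Finset.mem_univ p)))
    by_contra hc
    have hj' : I k j = n j := le_antisymm (hle j) (not_lt.mp hc)
    have : (∑ q, w j q (I k q)) = ⊤ := by
      rw [WithTop.sum_eq_top]
      exact ⟨j, Finset.mem_univ j, by rw [hwp j (I k j) (hle j)]; exact hj'⟩
    exact hinf (hj ▸ this)
  have main : ∀ k ≤ N, (∑ q, I k q) = k ∧ ∀ q, I k q ≤ n q := by
    intro k
    induction k with
    | zero =>
      intro _
      constructor
      · simp [hI0]
      · intro q; simp [hI0]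
    | succ k ih =>
      intro hk1
      have hk : k < N := by omega
      obtain ⟨hsum, hle⟩ := ih (le_of_lt hk)
      obtain ⟨j, hje, _, hupd⟩ := hstep k hk
      have hjlt : I k j < n j := key k hsum hle hk j hje
      constructor
      · rw [hupd, Finset.sum_update_of_mem (Finset.mem_univ j)]
        have hsplit : I k j + ∑ x ∈ Finset.univ \ {j}, I k x = k := by
          rw [Finset.sdiff_singleton_eq_erase, Finset.add_sum_erase _ _ (Finset.mem_univ j)]
          exact hsum
        omega
      · intro q
        rw [hupd]
        by_cases hq : q = j
        · subst hq; rw [Function.update_self]; omega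
        · rw [Function.update_of_ne hq]; exact hle q
  refine ⟨main, ?_, ?_⟩
  · intro k hk j ⟨hje, _⟩
    obtain ⟨hsum, hle⟩ := main k (le_of_lt hk)
    exact key k hsum hle hk j hje
  · obtain ⟨hsum, hle⟩ := main N le_rfl
    funext q
    have := (Finset.sum_eq_sum_iff_of_le (fun q _ => hle q)).mp (hsum.trans hN)
    exact this q (Finset.mem_univ q)
end
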